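/- arXiv:1303.4859 — 5 statements merged into one kernel-verified Lean document; each statement's English description precedes it below -/
import Mathlib

section
/- Let γ > 0, let (Ω, F, P) be a probability space, and let H be a family of real-valued random variables on Ω such that the family {e^{γX} : X ∈ H} is uniformly integrable. Then there exists a continuously differentiable function k : [0,∞) → [0,∞) with k(0) = γ, k'(x) > 0 for all x ≥ 0, and k(x) → +∞ as x → +∞, such that sup_{X ∈ H} E[K(X⁺)] < +∞, where K(x) = ∫₀ˣ k(t) e^{γt} dt and X⁺ = max(X,0). -/
/-!
Uniform integrability yields levels `Cₙ` with `E[e^{γX}; e^{γX} ≥ Cₙ] ≤ 2⁻ⁿ` for every `X ∈ H`.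
Take `k = γ + (1 - e^{-t}) + F`, where the smooth staircase `F = ∑ₙ smoothTransition (· - aₙ)`
climbs its `n`-th step after `aₙ ≥ log Cₙ / γ`, and `aₙ → ∞`. As `k` is nondecreasing,
`K(x) ≤ k(x) e^{γx} / γ`, and `F(x) ≤ #{n | aₙ < x}`; on `{aₙ < X}` we have `e^{γX} ≥ Cₙ`, so
`E[K(X⁺)] ≤ (γ + 1)/γ · (1 + E[e^{γX}]) + γ⁻¹ ∑ₙ 2⁻ⁿ`, uniformly in `X ∈ H`.
-/

open MeasureTheory Set Filter Real
open scoped NNReal ENNReal Topology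

noncomputable def smoothStaircase (a : ℕ → ℝ) (t : ℝ) : ℝ := ∑' n, smoothTransition (t - a n)

namespace smoothStaircase

variable {a : ℕ → ℝ}

lemma eq_sum {s : Finset ℕ} {t : ℝ} (h : ∀ n ∉ s, t ≤ a n) :
    smoothStaircase a t = ∑ n ∈ s, smoothTransition (t - a n) :=
  tsum_eq_sum fun n hn => smoothTransition.zero_of_nonpos (sub_nonpos.2 (h n hn))

lemma eq_zero {t : ℝ} (h : ∀ n, t ≤ a n) : smoothStaircase a t = 0 := by
  simpa using eq_sum (s := ∅) fun n _ => h n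

lemma nonneg (t : ℝ) : 0 ≤ smoothStaircase a t :=
  tsum_nonneg fun _ => smoothTransition.nonneg _

variable (ha : Tendsto a atTop atTop)
include ha

lemma exists_finset_le (c : ℝ) : ∃ s : Finset ℕ, ∀ n ∉ s, c ≤ a n := by
  have hfin : {n | ¬ c ≤ a n}.Finite := by
    rw [← Nat.cofinite_eq_atTop] at ha
    exact ha.eventually_ge_atTop c
  exact ⟨hfin.toFinset, fun n hn => by simpa using hn⟩

lemma summable (t : ℝ) : Summable fun n => smoothTransition (t - a n) := by
  obtain ⟨s, hs⟩ := exists_finset_le ha t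
  exact summable_of_ne_finset_zero fun n hn =>
    smoothTransition.zero_of_nonpos (sub_nonpos.2 (hs n hn))

lemma eventuallyEq_sum (x : ℝ) : ∃ s : Finset ℕ,
    smoothStaircase a =ᶠ[𝓝 x] fun t => ∑ n ∈ s, smoothTransition (t - a n) := by
  obtain ⟨s, hs⟩ := exists_finset_le ha (x + 1)
  refine ⟨s, ?_⟩
  filter_upwards [Iio_mem_nhds (lt_add_one x)] with t ht
  exact eq_sum fun n hn => ht.le.trans (hs n hn)

lemma contDiff {m : ℕ∞} : ContDiff ℝ m (smoothStaircase a) :=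
  contDiff_iff_contDiffAt.2 fun x => by
    obtain ⟨s, hs⟩ := eventuallyEq_sum ha x
    refine ContDiffAt.congr_of_eventuallyEq ?_ hs
    exact (ContDiff.sum fun n _ => smoothTransition.contDiff.comp
      (contDiff_id.sub contDiff_const)).contDiffAt

lemma monotone : Monotone (smoothStaircase a) := fun s t hst =>
  Summable.tsum_le_tsum (fun n => smoothTransition.monotone (by linarith))
    (summable ha s) (summable ha t)

lemma tendsto_atTop : Tendsto (smoothStaircase a) atTop atTop := by
  refine Filter.tendsto_atTop.2 fun b => ?_
  obtain ⟨M, hM⟩ := exists_nat_ge b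
  have hlarge : ∀ᶠ t in atTop, ∀ n ∈ Finset.range M, a n + 1 ≤ t :=
    (Finset.eventually_all _).2 fun n _ => eventually_ge_atTop _
  filter_upwards [hlarge] with t ht
  calc b ≤ ∑ n ∈ Finset.range M, smoothTransition (t - a n) := by
        rw [Finset.sum_congr rfl fun n hn =>
          smoothTransition.one_of_one_le (by linarith [ht n hn])]
        simpa using hM
    _ ≤ smoothStaircase a t :=
        Summable.sum_le_tsum _ (fun n _ => smoothTransition.nonneg _) (summable ha t)

lemma ofReal_mul_le_tsum_indicator {t c : ℝ} (hc : 0 ≤ c) :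
    ENNReal.ofReal (smoothStaircase a t * c) ≤
      ∑' n, (Ioi (a n)).indicator (fun _ => ENNReal.ofReal c) t := by
  rw [smoothStaircase, ← tsum_mul_right,
    ENNReal.ofReal_tsum_of_nonneg (fun n => mul_nonneg (smoothTransition.nonneg _) hc)
      ((summable ha t).mul_right c)]
  refine ENNReal.tsum_le_tsum fun n => ?_
  by_cases hn : a n < t
  · rw [indicator_of_mem (show t ∈ Ioi (a n) from hn)]
    exact ENNReal.ofReal_le_ofReal
      (mul_le_of_le_one_left hc (smoothTransition.le_one _))
  · rw [smoothTransition.zero_of_nonpos (by linarith)]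
    simp

end smoothStaircase

noncomputable def staircaseWeight (γ : ℝ) (a : ℕ → ℝ) (t : ℝ) : ℝ :=
  γ + (1 - exp (-t)) + smoothStaircase a t

namespace staircaseWeight

variable {γ : ℝ} {a : ℕ → ℝ}

lemma le_add_smoothStaircase (t : ℝ) : staircaseWeight γ a t ≤ γ + 1 + smoothStaircase a t := by
  have := exp_pos (-t)
  unfold staircaseWeight
  linarith

lemma nonneg (hγ : 0 ≤ γ) {t : ℝ} (ht : 0 ≤ t) : 0 ≤ staircaseWeight γ a t := by
  have := exp_le_one_iff.2 (neg_nonpos.2 ht)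
  have := smoothStaircase.nonneg (a := a) t
  unfold staircaseWeight
  linarith

lemma apply_zero (ha : ∀ n, 0 ≤ a n) : staircaseWeight γ a 0 = γ := by
  simp [staircaseWeight, smoothStaircase.eq_zero ha]

variable (ha : Tendsto a atTop atTop)
include ha

lemma contDiff {m : ℕ∞} : ContDiff ℝ m (staircaseWeight γ a) :=
  (contDiff_const.add (contDiff_const.sub (contDiff_exp.comp contDiff_neg))).add
    (smoothStaircase.contDiff ha)

lemma monotone : Monotone (staircaseWeight γ a) := fun s t hst => by
  have := exp_le_exp.2 (neg_le_neg hst)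
  have := smoothStaircase.monotone ha hst
  unfold staircaseWeight
  linarith

lemma deriv_pos (x : ℝ) : 0 < deriv (staircaseWeight γ a) x := by
  have hF : HasDerivAt (smoothStaircase a) (deriv (smoothStaircase a) x) x :=
    ((smoothStaircase.contDiff (m := 1) ha).differentiable one_ne_zero x).hasDerivAt
  have hk : HasDerivAt (staircaseWeight γ a) (exp (-x) + deriv (smoothStaircase a) x) x := by
    exact (((hasDerivAt_neg x).exp.const_sub 1).const_add γ).add hF |>.congr_deriv (by simp)
  rw [hk.deriv]
  exact add_pos_of_pos_of_nonneg (exp_pos _) (smoothStaircase.monotone ha).deriv_nonneg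

lemma tendsto_atTop : Tendsto (staircaseWeight γ a) atTop atTop := by
  have hbase : Tendsto (fun t => γ + (1 - exp (-t))) atTop (𝓝 (γ + (1 - 0))) :=
    tendsto_const_nhds.add (tendsto_const_nhds.sub tendsto_exp_neg_atTop_nhds_zero)
  exact hbase.add_atTop (smoothStaircase.tendsto_atTop ha)

end staircaseWeight

lemma integral_exp_mul {γ : ℝ} (hγ : γ ≠ 0) (x : ℝ) :
    ∫ t in (0:ℝ)..x, exp (γ * t) = (exp (γ * x) - 1) / γ := by
  rw [intervalIntegral.integral_comp_mul_left (fun t => exp t) hγ, integral_exp]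
  simp [div_eq_inv_mul]

lemma integral_mul_exp_le_of_monotoneOn {k : ℝ → ℝ} {γ x : ℝ} (hγ : 0 < γ) (hx : 0 ≤ x)
    (hk : MonotoneOn k (Icc 0 x)) (hkx : 0 ≤ k x) :
    ∫ t in (0:ℝ)..x, k t * exp (γ * t) ≤ k x * exp (γ * x) / γ := by
  have hexp : Continuous fun t => exp (γ * t) := by fun_prop
  have hint : IntervalIntegrable k volume 0 x :=
    (hk.mono (uIcc_of_le hx).subset).intervalIntegrable
  calc ∫ t in (0:ℝ)..x, k t * exp (γ * t)
      ≤ ∫ t in (0:ℝ)..x, k x * exp (γ * t) := by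
        refine intervalIntegral.integral_mono_on hx (hint.mul_continuousOn hexp.continuousOn)
          ((hexp.intervalIntegrable _ _).const_mul _) fun t ht => ?_
        exact mul_le_mul_of_nonneg_right (hk ht ⟨hx, le_rfl⟩ ht.2) (exp_pos _).le
    _ = k x * ((exp (γ * x) - 1) / γ) := by
        rw [intervalIntegral.integral_const_mul, integral_exp_mul hγ.ne']
    _ ≤ k x * exp (γ * x) / γ := by
        rw [mul_div_assoc]
        gcongr
        linarith

lemma ofReal_integral_staircaseWeight_le {γ : ℝ} (hγ : 0 < γ) {a : ℕ → ℝ}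
    (ha : Tendsto a atTop atTop) {x : ℝ} (hx : 0 ≤ x) :
    ENNReal.ofReal (∫ t in (0:ℝ)..x, staircaseWeight γ a t * exp (γ * t)) ≤
      ENNReal.ofReal ((γ + 1) / γ) * ENNReal.ofReal (exp (γ * x)) +
        ENNReal.ofReal γ⁻¹ *
          ∑' n, (Ioi (a n)).indicator (fun _ => ENNReal.ofReal (exp (γ * x))) x := by
  have he : 0 ≤ exp (γ * x) := (exp_pos _).le
  have hF := smoothStaircase.nonneg (a := a) x
  have hK : ∫ t in (0:ℝ)..x, staircaseWeight γ a t * exp (γ * t) ≤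
      (γ + 1) / γ * exp (γ * x) + γ⁻¹ * (smoothStaircase a x * exp (γ * x)) := by
    refine (integral_mul_exp_le_of_monotoneOn hγ hx ((staircaseWeight.monotone ha).monotoneOn _)
      (staircaseWeight.nonneg hγ.le hx)).trans ?_
    calc staircaseWeight γ a x * exp (γ * x) / γ
        ≤ (γ + 1 + smoothStaircase a x) * exp (γ * x) / γ := by
          gcongr
          exact staircaseWeight.le_add_smoothStaircase x
      _ = _ := by field_simp
  calc _ ≤ ENNReal.ofReal ((γ + 1) / γ * exp (γ * x)) +
        ENNReal.ofReal (γ⁻¹ * (smoothStaircase a x * exp (γ * x))) :=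
        (ENNReal.ofReal_le_ofReal hK).trans ENNReal.ofReal_add_le
    _ = ENNReal.ofReal ((γ + 1) / γ) * ENNReal.ofReal (exp (γ * x)) +
        ENNReal.ofReal γ⁻¹ * ENNReal.ofReal (smoothStaircase a x * exp (γ * x)) := by
        rw [ENNReal.ofReal_mul (by positivity), ENNReal.ofReal_mul (by positivity)]
    _ ≤ _ := by
        gcongr
        exact smoothStaircase.ofReal_mul_le_tsum_indicator ha he

lemma MeasureTheory.UniformIntegrable.exists_lintegral_tsum_indicator_le {ι Ω E : Type*}
    [MeasurableSpace Ω] {μ : Measure Ω} [NormedAddCommGroup E] [MeasurableSpace E]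
    [OpensMeasurableSpace E] {f : ι → Ω → E} (hf : ∀ i, Measurable (f i))
    (hUI : UniformIntegrable f 1 μ) :
    ∃ C : ℕ → ℝ≥0, ∀ i,
      ∫⁻ ω, ∑' n, {ω | C n ≤ ‖f i ω‖₊}.indicator (fun ω => ‖f i ω‖ₑ) ω ∂μ ≤ 2 := by
  choose C hC using fun n : ℕ =>
    hUI.spec one_ne_zero ENNReal.one_ne_top (ε := 2⁻¹ ^ n) (by positivity)
  refine ⟨C, fun i => ?_⟩
  rw [lintegral_tsum fun n => ((hf i).enorm.indicator
    (measurableSet_le measurable_const (hf i).nnnorm)).aemeasurable]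
  calc ∑' n, ∫⁻ ω, {ω | C n ≤ ‖f i ω‖₊}.indicator (fun ω => ‖f i ω‖ₑ) ω ∂μ
      ≤ ∑' n : ℕ, (2⁻¹ : ℝ≥0∞) ^ n := ENNReal.tsum_le_tsum fun n => by
        have h := hC n i
        rw [eLpNorm_one_eq_lintegral_enorm, ENNReal.ofReal_pow (by norm_num),
          ENNReal.ofReal_inv_of_pos two_pos, ENNReal.ofReal_ofNat] at h
        simpa only [enorm_indicator_eq_indicator_enorm] using h
    _ = 2 := by rw [ENNReal.tsum_geometric, ENNReal.one_sub_inv_two, inv_inv]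

lemma lintegral_ofReal_integral_staircaseWeight_le {Ω : Type*} [MeasurableSpace Ω]
    (P : Measure Ω) [IsProbabilityMeasure P] {γ : ℝ} (hγ : 0 < γ) {a : ℕ → ℝ}
    (ha0 : ∀ n, 0 ≤ a n) (ha : Tendsto a atTop atTop) {C : ℕ → ℝ≥0}
    (hC : ∀ n, (C n : ℝ) ≤ exp (γ * a n)) {X : Ω → ℝ} (hX : Measurable X) :
    ∫⁻ ω, ENNReal.ofReal (∫ t in (0:ℝ)..max (X ω) 0, staircaseWeight γ a t * exp (γ * t)) ∂P ≤
      ENNReal.ofReal ((γ + 1) / γ) * (1 + eLpNorm (fun ω => exp (γ * X ω)) 1 P) +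
        ENNReal.ofReal γ⁻¹ * ∫⁻ ω, ∑' n, {ω | C n ≤ ‖exp (γ * X ω)‖₊}.indicator
          (fun ω => ‖exp (γ * X ω)‖ₑ) ω ∂P := by
  have hg : Measurable fun ω => exp (γ * X ω) := by fun_prop
  have hpoint : ∀ ω,
      ENNReal.ofReal (∫ t in (0:ℝ)..max (X ω) 0, staircaseWeight γ a t * exp (γ * t)) ≤
        ENNReal.ofReal ((γ + 1) / γ) * (1 + ‖exp (γ * X ω)‖ₑ) +
          ENNReal.ofReal γ⁻¹ * ∑' n, {ω | C n ≤ ‖exp (γ * X ω)‖₊}.indicator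
            (fun ω => ‖exp (γ * X ω)‖ₑ) ω := by
    intro ω
    refine (ofReal_integral_staircaseWeight_le hγ ha (le_max_right _ _)).trans ?_
    rw [Real.enorm_eq_ofReal (exp_pos _).le]
    gcongr with n
    · rw [← ENNReal.ofReal_one, ← ENNReal.ofReal_add zero_le_one (exp_pos _).le]
      refine ENNReal.ofReal_le_ofReal ?_
      rcases le_total (X ω) 0 with h | h
      · simp [max_eq_right h, (exp_pos _).le]
      · simp [max_eq_left h]
    · by_cases hn : a n < max (X ω) 0
      · have hXn : a n < X ω := (lt_max_iff.1 hn).resolve_right (not_lt.2 (ha0 n))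
        have hmem : C n ≤ ‖exp (γ * X ω)‖₊ := by
          rw [← NNReal.coe_le_coe, coe_nnnorm, Real.norm_of_nonneg (exp_pos _).le]
          exact (hC n).trans (exp_le_exp.2 (by gcongr))
        rw [indicator_of_mem (show max (X ω) 0 ∈ Ioi (a n) from hn),
          indicator_of_mem (show ω ∈ {ω | C n ≤ ‖exp (γ * X ω)‖₊} from hmem),
          max_eq_left ((ha0 n).trans hXn.le), Real.enorm_eq_ofReal (exp_pos _).le]
      · rw [indicator_of_notMem (show max (X ω) 0 ∉ Ioi (a n) from hn)]
        exact zero_le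
  refine (lintegral_mono hpoint).trans_eq ?_
  rw [lintegral_add_left ((hg.enorm.const_add 1).const_mul _), lintegral_const_mul _
      (hg.enorm.const_add 1), lintegral_const_mul _ (Measurable.tsum fun n =>
      hg.enorm.indicator (measurableSet_le measurable_const hg.nnnorm)),
    lintegral_add_left measurable_const, lintegral_const, measure_univ, mul_one,
    eLpNorm_one_eq_lintegral_enorm]

/-- If the family `{e^{γ X} : X ∈ H}` is uniformly integrable, then there exists a
continuously differentiable function `k : [0,∞) → [0,∞)` with `k 0 = γ`, `k' > 0` on `[0,∞)`
and `k x → +∞`, such that `sup_{X ∈ H} E[K(X⁺)] < ∞`, where `K x = ∫₀ˣ k t · e^{γ t} dt`. -/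
theorem stmt_1 {Ω : Type*} [MeasurableSpace Ω] (P : Measure Ω) [IsProbabilityMeasure P]
    (γ : ℝ) (hγ : 0 < γ)
    (H : Set (Ω → ℝ)) (hHmeas : ∀ X ∈ H, Measurable X)
    (hUI : UniformIntegrable (fun X : H => fun ω => Real.exp (γ * (X : Ω → ℝ) ω)) 1 P) :
    ∃ k : ℝ → ℝ,
      ContDiffOn ℝ 1 k (Set.Ici 0) ∧
      k 0 = γ ∧
      (∀ x : ℝ, 0 ≤ x → 0 < derivWithin k (Set.Ici 0) x) ∧
      (∀ x : ℝ, 0 ≤ x → 0 ≤ k x) ∧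
      Tendsto k atTop atTop ∧
      ∃ C : ℝ, ∀ X ∈ H,
        (∫⁻ ω, ENNReal.ofReal (∫ t in (0:ℝ)..(max (X ω) 0), k t * Real.exp (γ * t)) ∂P)
          ≤ ENNReal.ofReal C := by
  obtain ⟨C, hC⟩ := hUI.exists_lintegral_tsum_indicator_le fun X : H =>
    ((hHmeas X X.2).const_mul γ).exp
  obtain ⟨M, hM⟩ := hUI.2.2
  set a : ℕ → ℝ := fun n => n + max 0 (log (C n) / γ)
  have ha0 : ∀ n, 0 ≤ a n := fun n => by positivity
  have ha : Tendsto a atTop atTop :=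
    tendsto_atTop_mono (fun n => le_add_of_nonneg_right (le_max_left _ _))
      tendsto_natCast_atTop_atTop
  have hCa : ∀ n, (C n : ℝ) ≤ exp (γ * a n) := fun n => by
    refine (le_exp_log _).trans (exp_le_exp.2 ?_)
    calc log (C n) = γ * (log (C n) / γ) := by field_simp
      _ ≤ γ * a n := by
        gcongr
        exact (le_max_right _ _).trans (le_add_of_nonneg_left n.cast_nonneg)
  refine ⟨staircaseWeight γ a, (staircaseWeight.contDiff ha).contDiffOn,
    staircaseWeight.apply_zero ha0, fun x hx => ?_, fun x hx => staircaseWeight.nonneg hγ.le hx,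
    staircaseWeight.tendsto_atTop ha,
    (ENNReal.ofReal ((γ + 1) / γ) * (1 + M) + ENNReal.ofReal γ⁻¹ * 2).toReal, fun X hX => ?_⟩
  · rw [((staircaseWeight.contDiff (m := 1) ha).differentiable one_ne_zero x).derivWithin
      (uniqueDiffOn_Ici 0 x hx)]
    exact staircaseWeight.deriv_pos ha x
  · rw [ENNReal.ofReal_toReal (by finiteness)]
    refine (lintegral_ofReal_integral_staircaseWeight_le P hγ ha0 ha hCa (hHmeas X hX)).trans ?_
    gcongr
    exacts [hM ⟨X, hX⟩, hC ⟨X, hX⟩]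
end

section
/- Let γ > 0 and let k : [0,∞) → ℝ be continuously differentiable with k(0) = γ and k'(x) > 0 for all x ≥ 0. Let Ψ'(x) = k(x)(e^{γx} − 1), which is a strictly increasing continuous bijection from [0,∞) onto [0,∞), and let Φ' : [0,∞) → [0,∞) denote its inverse function. Then Φ' is differentiable and for every x ≥ 0 its derivative satisfies Φ''(x) ≤ 1/(γ(x + γ)). -/
/-!
Write `Ψ' x = k x (e^{γx} - 1)`. Since `γ k (e^{γx} - 1) = γ Ψ'`, the product rule gives
`Ψ'' = k' (e^{γx} - 1) + γ (Ψ' + k) ≥ γ (Ψ' + γ)`, because `k' > 0` and `k ≥ k 0 = γ`.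
So `Ψ'` is strictly increasing with `Ψ'' > 0`, its inverse `Φ'` is strictly increasing, hence
continuous, and the inverse function rule gives `Φ'' x = 1 / Ψ''(Φ' x) ≤ 1 / (γ (x + γ))`.
-/

open Set Filter Topology

theorem strictMonoOn_of_forall_hasDerivWithinAt_pos {D : Set ℝ} (hD : Convex ℝ D)
    {f f' : ℝ → ℝ} (hf : ∀ x ∈ D, HasDerivWithinAt f (f' x) D x) (hf' : ∀ x ∈ D, 0 < f' x) :
    StrictMonoOn f D :=
  strictMonoOn_of_hasDerivWithinAt_pos hD (fun x hx => (hf x hx).continuousWithinAt)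
    (fun x hx => (hf x (interior_subset hx)).mono interior_subset)
    (fun x hx => hf' x (interior_subset hx))

theorem StrictMonoOn.strictMonoOn_of_rightInvOn {α β : Type*} [LinearOrder α] [LinearOrder β]
    {f : α → β} {g : β → α} {s : Set α} {t : Set β} (hf : StrictMonoOn f s)
    (hfg : RightInvOn g f t) (hg : MapsTo g t s) : StrictMonoOn g t := by
  intro a ha b hb hab
  by_contra! h
  have hba := hf.monotoneOn (hg hb) (hg ha) h
  rw [hfg hb, hfg ha] at hba
  exact hba.not_gt hab

theorem StrictMonoOn.continuousOn_Ici_of_image_eq {α β : Type*} [LinearOrder α]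
    [TopologicalSpace α] [OrderTopology α] [LinearOrder β] [TopologicalSpace β] [OrderTopology β]
    [DenselyOrdered β] {f : α → β} {a : α} (hf : StrictMonoOn f (Ici a))
    (himage : f '' Ici a = Ici (f a)) : ContinuousOn f (Ici a) := by
  intro x hx
  rcases (mem_Ici.1 hx).eq_or_lt with rfl | hax
  · refine continuousWithinAt_right_of_monotoneOn_of_image_mem_nhdsWithin hf.monotoneOn
      self_mem_nhdsWithin ?_
    rw [himage]
    exact self_mem_nhdsWithin
  · refine (continuousAt_of_monotoneOn_of_image_mem_nhds hf.monotoneOn (Ici_mem_nhds hax)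
      ?_).continuousWithinAt
    rw [himage]
    exact Ici_mem_nhds (hf self_mem_Ici hx hax)

theorem HasDerivWithinAt.of_local_left_inverse {𝕜 : Type*} [NontriviallyNormedField 𝕜]
    {f g : 𝕜 → 𝕜} {f' a : 𝕜} {s t : Set 𝕜} (hg : Tendsto g (𝓝[s] a) (𝓝[t] (g a)))
    (hf : HasDerivWithinAt f f' t (g a)) (hf' : f' ≠ 0) (ha : a ∈ s)
    (hfg : ∀ᶠ x in 𝓝[s] a, f (g x) = x) : HasDerivWithinAt g f'⁻¹ s a :=
  HasFDerivWithinAt.of_local_left_inverse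
    (f' := ContinuousLinearEquiv.unitsEquivAut 𝕜 (Units.mk0 f' hf')) hg hf ha hfg

noncomputable def psi (γ : ℝ) (k : ℝ → ℝ) (x : ℝ) : ℝ := k x * (Real.exp (γ * x) - 1)

noncomputable def psiDeriv (γ : ℝ) (k k' : ℝ → ℝ) (x : ℝ) : ℝ :=
  k' x * (Real.exp (γ * x) - 1) + γ * (psi γ k x + k x)

theorem hasDerivWithinAt_psi {k k' : ℝ → ℝ} {s : Set ℝ} {x : ℝ} (γ : ℝ)
    (hk : HasDerivWithinAt k (k' x) s x) :
    HasDerivWithinAt (psi γ k) (psiDeriv γ k k' x) s x := by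
  have hexp : HasDerivAt (fun y => Real.exp (γ * y) - 1) (Real.exp (γ * x) * γ) x :=
    (((hasDerivAt_id x).const_mul γ).exp.sub_const 1).congr_deriv (by simp)
  refine (hk.mul hexp.hasDerivWithinAt).congr_deriv ?_
  simp only [psiDeriv, psi]
  ring

section

variable {γ : ℝ} {k k' : ℝ → ℝ} (hγ : 0 < γ)
  (hk_deriv : ∀ x ∈ Ici (0 : ℝ), HasDerivWithinAt k (k' x) (Ici 0) x) (hk_zero : k 0 = γ)
  (hk'_pos : ∀ x : ℝ, 0 ≤ x → 0 < k' x)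
include hk_deriv hk_zero hk'_pos

theorem le_apply_of_hasDerivWithinAt_pos {x : ℝ} (hx : 0 ≤ x) : γ ≤ k x :=
  hk_zero ▸ (strictMonoOn_of_forall_hasDerivWithinAt_pos (convex_Ici 0) hk_deriv hk'_pos).monotoneOn
    self_mem_Ici hx hx

include hγ

theorem psi_nonneg {x : ℝ} (hx : 0 ≤ x) : 0 ≤ psi γ k x :=
  mul_nonneg (hγ.le.trans (le_apply_of_hasDerivWithinAt_pos hk_deriv hk_zero hk'_pos hx))
    (sub_nonneg.2 (Real.one_le_exp (mul_nonneg hγ.le hx)))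

theorem mul_add_le_psiDeriv {x : ℝ} (hx : 0 ≤ x) : γ * (psi γ k x + γ) ≤ psiDeriv γ k k' x := by
  have hk := le_apply_of_hasDerivWithinAt_pos hk_deriv hk_zero hk'_pos hx
  have hk'_term :=
    mul_nonneg (hk'_pos x hx).le (sub_nonneg.2 (Real.one_le_exp (mul_nonneg hγ.le hx)))
  rw [psiDeriv]
  linarith [mul_le_mul_of_nonneg_left hk hγ.le]

theorem psiDeriv_pos {x : ℝ} (hx : 0 ≤ x) : 0 < psiDeriv γ k k' x :=
  (mul_pos hγ (by linarith [psi_nonneg hγ hk_deriv hk_zero hk'_pos hx])).trans_le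
    (mul_add_le_psiDeriv hγ hk_deriv hk_zero hk'_pos hx)

end

theorem stmt_6_general (γ : ℝ) (hγ : 0 < γ) (k k' : ℝ → ℝ)
    (hk_deriv : ∀ x ∈ Set.Ici (0:ℝ), HasDerivWithinAt k (k' x) (Set.Ici 0) x)
    (hk_zero : k 0 = γ)
    (hk'_pos : ∀ x : ℝ, 0 ≤ x → 0 < k' x)
    (Ψ' : ℝ → ℝ) (hΨ' : ∀ x : ℝ, Ψ' x = k x * (Real.exp (γ * x) - 1))
    (Φ' : ℝ → ℝ)
    (hΦ'_maps : Set.MapsTo Φ' (Set.Ici 0) (Set.Ici 0))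
    (hΦ'_inv : Set.InvOn Φ' Ψ' (Set.Ici 0) (Set.Ici 0)) :
    ∀ x : ℝ, 0 ≤ x →
      DifferentiableWithinAt ℝ Φ' (Set.Ici 0) x ∧
      derivWithin Φ' (Set.Ici 0) x ≤ 1 / (γ * (x + γ)) := by
  obtain rfl : Ψ' = psi γ k := funext hΨ'
  have hΨ'_deriv : ∀ y ∈ Ici (0 : ℝ), HasDerivWithinAt (psi γ k) (psiDeriv γ k k' y) (Ici 0) y :=
    fun y hy => hasDerivWithinAt_psi γ (hk_deriv y hy)
  have hΨ'_maps : MapsTo (psi γ k) (Ici 0) (Ici 0) := fun y hy =>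
    psi_nonneg hγ hk_deriv hk_zero hk'_pos hy
  have hΦ'_mono : StrictMonoOn Φ' (Ici 0) :=
    (strictMonoOn_of_forall_hasDerivWithinAt_pos (convex_Ici 0) hΨ'_deriv
      fun y hy => psiDeriv_pos hγ hk_deriv hk_zero hk'_pos hy).strictMonoOn_of_rightInvOn
      hΦ'_inv.2 hΦ'_maps
  have hΦ'_zero : Φ' 0 = 0 := by
    simpa [psi] using hΦ'_inv.1 (self_mem_Ici (a := (0 : ℝ)))
  have hΦ'_cont : ContinuousOn Φ' (Ici 0) := hΦ'_mono.continuousOn_Ici_of_image_eq <| by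
    rw [(hΦ'_inv.symm.bijOn hΦ'_maps hΨ'_maps).image_eq, hΦ'_zero]
  intro x hx
  have hder : HasDerivWithinAt Φ' (psiDeriv γ k k' (Φ' x))⁻¹ (Ici 0) x :=
    .of_local_left_inverse ((hΦ'_cont x hx).tendsto_nhdsWithin hΦ'_maps)
      (hΨ'_deriv _ (hΦ'_maps hx)) (psiDeriv_pos hγ hk_deriv hk_zero hk'_pos (hΦ'_maps hx)).ne' hx
      (eventually_nhdsWithin_of_forall fun y hy => hΦ'_inv.2 hy)
  refine ⟨hder.differentiableWithinAt, ?_⟩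
  rw [hder.derivWithin (uniqueDiffOn_Ici 0 x hx), one_div]
  have hlower := mul_add_le_psiDeriv hγ hk_deriv hk_zero hk'_pos (hΦ'_maps hx)
  rw [hΦ'_inv.2 hx] at hlower
  exact inv_anti₀ (by positivity) hlower

/-- For `γ > 0` and `k` continuously differentiable on `[0,∞)` with `k 0 = γ` and
`k' > 0`, let `Ψ' x = k x (e^{γx} - 1)` (a strictly increasing continuous bijection of `[0,∞)`
onto itself) and let `Φ'` be its inverse. Then `Φ'` is differentiable and its derivative `Φ''`
satisfies `Φ'' x ≤ 1/(γ (x + γ))` for all `x ≥ 0`. -/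
theorem stmt_6 (γ : ℝ) (hγ : 0 < γ) (k k' : ℝ → ℝ)
    (hk_deriv : ∀ x ∈ Set.Ici (0:ℝ), HasDerivWithinAt k (k' x) (Set.Ici 0) x)
    (hk'_cont : ContinuousOn k' (Set.Ici 0))
    (hk_zero : k 0 = γ)
    (hk'_pos : ∀ x : ℝ, 0 ≤ x → 0 < k' x)
    (Ψ' : ℝ → ℝ) (hΨ' : ∀ x : ℝ, Ψ' x = k x * (Real.exp (γ * x) - 1))
    (Φ' : ℝ → ℝ)
    (hΦ'_maps : Set.MapsTo Φ' (Set.Ici 0) (Set.Ici 0))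
    (hΦ'_inv : Set.InvOn Φ' Ψ' (Set.Ici 0) (Set.Ici 0)) :
    ∀ x : ℝ, 0 ≤ x →
      DifferentiableWithinAt ℝ Φ' (Set.Ici 0) x ∧
      derivWithin Φ' (Set.Ici 0) x ≤ 1 / (γ * (x + γ)) :=
  stmt_6_general γ hγ k k' hk_deriv hk_zero hk'_pos Ψ' hΨ' Φ' hΦ'_maps hΦ'_inv
end

section
/- Let γ > 0 and let k : [0,∞) → ℝ be continuously differentiable with k(0) = γ and k'(x) > 0 for all x ≥ 0. Let Ψ'(x) = k(x)(e^{γx} − 1), let Φ' : [0,∞) → [0,∞) be the inverse function of Ψ', and let Φ₀'(x) = (1/γ) ln(x/γ + 1). Then the function Λ' = Φ₀' − Φ' is nondecreasing on [0,∞). -/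
/-!
Write `u = Φ' x`, so that `x = Ψ' u` and `Λ' x = g u` with `g u = (1/γ) log (Ψ' u / γ + 1) - u`.
Since `Ψ'` is nondecreasing, so is its inverse `Φ'`, and it remains to see that `g` is
nondecreasing. This follows from the factorisation
`Ψ' u / γ + 1 = e^{γu} (1 + (k u / γ - 1) (1 - e^{-γu}))`: the factor `e^{γu}` cancels the `- u`,
and what is left is the logarithm of one plus a product of two nonnegative nondecreasing
functions, because `k ≥ k 0 = γ` is nondecreasing.
-/

open Set Real

lemma monotoneOn_mul_exp_sub_one {γ : ℝ} (hγ : 0 ≤ γ) {k : ℝ → ℝ} (hk : MonotoneOn k (Ici 0))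
    (hk₀ : ∀ x ∈ Ici (0 : ℝ), 0 ≤ k x) :
    MonotoneOn (fun x ↦ k x * (exp (γ * x) - 1)) (Ici 0) := by
  have hexp : MonotoneOn (fun x ↦ exp (γ * x) - 1) (Ici 0) := fun x _ y _ hxy ↦ by
    dsimp only; gcongr
  exact hk.mul hexp hk₀ fun x hx ↦ sub_nonneg.2 (one_le_exp (mul_nonneg hγ hx))

lemma mul_exp_sub_one_div_add_one {γ : ℝ} (hγ : γ ≠ 0) (c u : ℝ) :
    c * (exp (γ * u) - 1) / γ + 1 = exp (γ * u) * (1 + (c / γ - 1) * (1 - exp (-(γ * u)))) := by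
  rw [exp_neg]
  field_simp
  ring

lemma monotoneOn_inv_mul_log_mul_exp_sub_one_div_add_one_sub {γ : ℝ} (hγ : 0 < γ) {k : ℝ → ℝ}
    (hk : MonotoneOn k (Ici 0)) (hkγ : ∀ x ∈ Ici (0 : ℝ), γ ≤ k x) :
    MonotoneOn (fun u ↦ 1 / γ * log (k u * (exp (γ * u) - 1) / γ + 1) - u) (Ici 0) := by
  set h : ℝ → ℝ := fun u ↦ 1 + (k u / γ - 1) * (1 - exp (-(γ * u)))
  have hkγ₁ : ∀ u ∈ Ici (0 : ℝ), 0 ≤ k u / γ - 1 := fun u hu ↦ by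
    rw [sub_nonneg, le_div_iff₀ hγ, one_mul]; exact hkγ u hu
  have hexp : ∀ u ∈ Ici (0 : ℝ), 0 ≤ 1 - exp (-(γ * u)) := fun u hu ↦
    sub_nonneg.2 (exp_le_one_iff.2 (neg_nonpos.2 (mul_nonneg hγ.le hu)))
  have hh_pos : ∀ u ∈ Ici (0 : ℝ), 0 < h u := fun u hu ↦ by
    have := mul_nonneg (hkγ₁ u hu) (hexp u hu)
    simp only [h]; linarith
  have hh : MonotoneOn h (Ici 0) := by
    refine fun x hx y hy hxy ↦ add_le_add_right (mul_le_mul ?_ ?_ (hexp x hx) (hkγ₁ y hy)) 1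
    · gcongr; exact hk hx hy hxy
    · gcongr
  have heq : EqOn (fun u ↦ 1 / γ * log (h u))
      (fun u ↦ 1 / γ * log (k u * (exp (γ * u) - 1) / γ + 1) - u) (Ici 0) := fun u hu ↦ by
    simp only
    rw [mul_exp_sub_one_div_add_one hγ.ne', log_mul (exp_pos _).ne' (hh_pos u hu).ne', log_exp]
    field_simp
    ring
  refine MonotoneOn.congr (fun x hx y hy hxy ↦ ?_) heq
  gcongr
  exacts [hh_pos x hx, hh hx hy hxy]

theorem stmt_7_general (γ : ℝ) (hγ : 0 < γ) (k k' : ℝ → ℝ)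
    (hk_deriv : ∀ x ∈ Set.Ici (0:ℝ), HasDerivWithinAt k (k' x) (Set.Ici 0) x)
    (hk_zero : k 0 = γ)
    (hk'_pos : ∀ x : ℝ, 0 ≤ x → 0 < k' x)
    (Ψ' : ℝ → ℝ) (hΨ' : ∀ x : ℝ, Ψ' x = k x * (Real.exp (γ * x) - 1))
    (Φ' : ℝ → ℝ)
    (hΦ'_maps : Set.MapsTo Φ' (Set.Ici 0) (Set.Ici 0))
    (hΦ'_inv : Set.InvOn Φ' Ψ' (Set.Ici 0) (Set.Ici 0)) :
    MonotoneOn (fun x : ℝ => (1 / γ) * Real.log (x / γ + 1) - Φ' x) (Set.Ici 0) := by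
  have hk_mono : MonotoneOn k (Ici 0) :=
    monotoneOn_of_hasDerivWithinAt_nonneg (convex_Ici 0)
      (fun x hx ↦ (hk_deriv x hx).continuousWithinAt)
      (fun x hx ↦ (hk_deriv x (interior_subset hx)).mono interior_subset)
      (fun x hx ↦ (hk'_pos x (interior_subset hx)).le)
  have hk_ge : ∀ x ∈ Ici (0 : ℝ), γ ≤ k x := fun x hx ↦ hk_zero ▸ hk_mono self_mem_Ici hx hx
  have hΨ'_mono : MonotoneOn Ψ' (Ici 0) :=
    (monotoneOn_mul_exp_sub_one hγ.le hk_mono fun x hx ↦ hγ.le.trans (hk_ge x hx)).congr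
      fun x _ ↦ (hΨ' x).symm
  have hΦ'_mono : MonotoneOn Φ' (Ici 0) :=
    Function.monotoneOn_of_rightInvOn_of_mapsTo hΨ'_mono hΦ'_inv.2 hΦ'_maps
  refine ((monotoneOn_inv_mul_log_mul_exp_sub_one_div_add_one_sub hγ hk_mono hk_ge).comp
    hΦ'_mono hΦ'_maps).congr fun x hx ↦ ?_
  simp only [Function.comp_apply, ← hΨ', hΦ'_inv.2 hx]

/-- With `γ > 0`, `k` continuously differentiable on `[0,∞)`, `k 0 = γ`, `k' > 0`,
`Ψ' x = k x (e^{γx} - 1)` with inverse `Φ'`, and `Φ₀' x = (1/γ) ln (x/γ + 1)`, the function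
`Λ' = Φ₀' - Φ'` is nondecreasing on `[0,∞)`. -/
theorem stmt_7 (γ : ℝ) (hγ : 0 < γ) (k k' : ℝ → ℝ)
    (hk_deriv : ∀ x ∈ Set.Ici (0:ℝ), HasDerivWithinAt k (k' x) (Set.Ici 0) x)
    (hk'_cont : ContinuousOn k' (Set.Ici 0))
    (hk_zero : k 0 = γ)
    (hk'_pos : ∀ x : ℝ, 0 ≤ x → 0 < k' x)
    (Ψ' : ℝ → ℝ) (hΨ' : ∀ x : ℝ, Ψ' x = k x * (Real.exp (γ * x) - 1))
    (Φ' : ℝ → ℝ)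
    (hΦ'_maps : Set.MapsTo Φ' (Set.Ici 0) (Set.Ici 0))
    (hΦ'_inv : Set.InvOn Φ' Ψ' (Set.Ici 0) (Set.Ici 0)) :
    MonotoneOn (fun x : ℝ => (1 / γ) * Real.log (x / γ + 1) - Φ' x) (Set.Ici 0) :=
  stmt_7_general γ hγ k k' hk_deriv hk_zero hk'_pos Ψ' hΨ' Φ' hΦ'_maps hΦ'_inv
end

section
/- Let γ > 0 and let k : [0,∞) → ℝ be continuously differentiable with k(0) = γ, k'(x) > 0 for all x ≥ 0, and k(x) → +∞ as x → +∞. Let Ψ'(x) = k(x)(e^{γx} − 1), let Φ' : [0,∞) → [0,∞) be the inverse function of Ψ', and let Φ₀'(x) = (1/γ) ln(x/γ + 1). Then Λ'(x) = Φ₀'(x) − Φ'(x) tends to +∞ as x → +∞. -/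
open Set Filter Topology Real

/-!
Writing `y = Φ' x`, so that `x = k y (e^{γy} - 1)`, we get
`Φ₀' x - Φ' x = (1/γ) ln (k y (1 - e^{-γy}) / γ + e^{-γy})`, which tends to `+∞` with `y`
because `k y → +∞`. And `y = Φ' x → +∞` as `x → +∞`, since `Ψ'` is bounded on compact sets.
-/

theorem tendsto_atTop_of_rightInvOn {Ψ Φ : ℝ → ℝ} {a b : ℝ} (hΨ : ContinuousOn Ψ (Ici b))
    (hΦ : MapsTo Φ (Ici a) (Ici b)) (hinv : RightInvOn Φ Ψ (Ici a)) :
    Tendsto Φ atTop atTop := by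
  refine tendsto_atTop.2 fun c => ?_
  obtain ⟨C, hC⟩ : BddAbove (Ψ '' Icc b c) :=
    isCompact_Icc.bddAbove_image (hΨ.mono Icc_subset_Ici_self)
  filter_upwards [eventually_ge_atTop a, eventually_gt_atTop C] with x hxa hxC
  by_contra! hlt
  have hx : Ψ (Φ x) = x := hinv (mem_Ici.2 hxa)
  have := hC (mem_image_of_mem Ψ ⟨hΦ (mem_Ici.2 hxa), hlt.le⟩)
  linarith

theorem tendsto_log_mul_exp_sub_one_sub {γ : ℝ} (hγ : 0 < γ) {k : ℝ → ℝ}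
    (hk : Tendsto k atTop atTop) :
    Tendsto (fun y => 1 / γ * log (k y * (exp (γ * y) - 1) / γ + 1) - y) atTop atTop := by
  have hexp : Tendsto (fun y => exp (-(γ * y))) atTop (𝓝 0) :=
    tendsto_exp_neg_atTop_nhds_zero.comp (tendsto_id.const_mul_atTop hγ)
  have harg : Tendsto (fun y => k y / γ * (1 - exp (-(γ * y))) + exp (-(γ * y))) atTop atTop := by
    refine Tendsto.atTop_add ((hk.atTop_div_const hγ).atTop_mul_pos one_pos ?_) hexp
    simpa using (tendsto_const_nhds (x := (1 : ℝ))).sub hexp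
  refine ((tendsto_log_atTop.comp harg).const_mul_atTop (one_div_pos.2 hγ)).congr' ?_
  filter_upwards [harg.eventually_gt_atTop 0] with y hy
  have hfactor : k y * (exp (γ * y) - 1) / γ + 1
      = (k y / γ * (1 - exp (-(γ * y))) + exp (-(γ * y))) * exp (γ * y) := by
    rw [exp_neg]
    field_simp
  rw [Function.comp_apply, hfactor, log_mul hy.ne' (exp_pos _).ne', log_exp]
  field_simp
  ring

theorem stmt_8_general (γ : ℝ) (hγ : 0 < γ) (k k' : ℝ → ℝ)
    (hk_deriv : ∀ x ∈ Set.Ici (0:ℝ), HasDerivWithinAt k (k' x) (Set.Ici 0) x)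
    (hk_top : Tendsto k atTop atTop)
    (Ψ' : ℝ → ℝ) (hΨ' : ∀ x : ℝ, Ψ' x = k x * (Real.exp (γ * x) - 1))
    (Φ' : ℝ → ℝ)
    (hΦ'_maps : Set.MapsTo Φ' (Set.Ici 0) (Set.Ici 0))
    (hΦ'_inv : Set.InvOn Φ' Ψ' (Set.Ici 0) (Set.Ici 0)) :
    Tendsto (fun x : ℝ => (1 / γ) * Real.log (x / γ + 1) - Φ' x) atTop atTop := by
  have hk_cont : ContinuousOn k (Ici 0) := fun x hx => (hk_deriv x hx).continuousWithinAt
  have hΨ'_cont : ContinuousOn Ψ' (Ici 0) := by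
    rw [funext hΨ']
    exact hk_cont.mul (by fun_prop)
  have hΦ'_top := tendsto_atTop_of_rightInvOn hΨ'_cont hΦ'_maps hΦ'_inv.2
  refine ((tendsto_log_mul_exp_sub_one_sub hγ hk_top).comp hΦ'_top).congr' ?_
  filter_upwards [eventually_ge_atTop 0] with x hx
  rw [Function.comp_apply, ← hΨ', hΦ'_inv.2 (mem_Ici.2 hx)]

/-- With `γ > 0`, `k` continuously differentiable on `[0,∞)`, `k 0 = γ`, `k' > 0`,
`k x → +∞`, `Ψ' x = k x (e^{γx} - 1)` with inverse `Φ'`, and `Φ₀' x = (1/γ) ln (x/γ + 1)`, the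
function `Λ' x = Φ₀' x - Φ' x` tends to `+∞` as `x → +∞`. -/
theorem stmt_8 (γ : ℝ) (hγ : 0 < γ) (k k' : ℝ → ℝ)
    (hk_deriv : ∀ x ∈ Set.Ici (0:ℝ), HasDerivWithinAt k (k' x) (Set.Ici 0) x)
    (hk'_cont : ContinuousOn k' (Set.Ici 0))
    (hk_zero : k 0 = γ)
    (hk'_pos : ∀ x : ℝ, 0 ≤ x → 0 < k' x)
    (hk_top : Tendsto k atTop atTop)
    (Ψ' : ℝ → ℝ) (hΨ' : ∀ x : ℝ, Ψ' x = k x * (Real.exp (γ * x) - 1))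
    (Φ' : ℝ → ℝ)
    (hΦ'_maps : Set.MapsTo Φ' (Set.Ici 0) (Set.Ici 0))
    (hΦ'_inv : Set.InvOn Φ' Ψ' (Set.Ici 0) (Set.Ici 0)) :
    Tendsto (fun x : ℝ => (1 / γ) * Real.log (x / γ + 1) - Φ' x) atTop atTop :=
  stmt_8_general γ hγ k k' hk_deriv hk_top Ψ' hΨ' Φ' hΦ'_maps hΦ'_inv
end

section
/- Let γ > 0, C₁ ≥ 0, and let g : ℝ^d → ℝ satisfy g(0) = 0, 0 ≤ g(z) ≤ C₁ + (γ/2)‖z‖² for all z ∈ ℝ^d. Let z, q ∈ ℝ^d be such that q is a subgradient of g at z, i.e. g(w) − g(z) ≥ ⟨w − z, q⟩ for all w ∈ ℝ^d. Then ‖q‖² ≤ 4γC₁ + 4γ²‖z‖². -/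
open scoped RealInnerProductSpace

/-! Test the subgradient inequality at `w = z + q / (2γ)`. Since `g z ≥ 0`, this gives
`‖q‖² / (2γ) ≤ C₁ + (γ/2)‖z + q/(2γ)‖² ≤ C₁ + γ‖z‖² + ‖q‖² / (4γ)`, using
`‖a + b‖² ≤ 2‖a‖² + 2‖b‖²`, and the `‖q‖²` term on the right is absorbed by the left. -/

theorem norm_add_sq_le_two_mul {E : Type*} [SeminormedAddCommGroup E] (a b : E) :
    ‖a + b‖ ^ 2 ≤ 2 * (‖a‖ ^ 2 + ‖b‖ ^ 2) :=
  (pow_le_pow_left₀ (norm_nonneg _) (norm_add_le a b) 2).trans add_sq_le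

theorem sq_norm_subgradient_le_of_quadratic_growth {E : Type*} [NormedAddCommGroup E]
    [InnerProductSpace ℝ E] {g : E → ℝ} {γ C : ℝ} {z q : E} (hγ : 0 < γ) (hgz : 0 ≤ g z)
    (hg : ∀ w, g w ≤ C + γ / 2 * ‖w‖ ^ 2) (hsub : ∀ w, ⟪w - z, q⟫ ≤ g w - g z) :
    ‖q‖ ^ 2 ≤ 4 * γ * C + 4 * γ ^ 2 * ‖z‖ ^ 2 := by
  set t : ℝ := (2 * γ)⁻¹
  have htγ : γ * t = 1 / 2 := by simp only [t]; field_simp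
  have hstep : t * ‖q‖ ^ 2 ≤ C + γ / 2 * ‖z + t • q‖ ^ 2 := by
    have h := hsub (z + t • q)
    rw [add_sub_cancel_left, real_inner_smul_left, real_inner_self_eq_norm_sq] at h
    linarith [hg (z + t • q)]
  have hnorm : ‖z + t • q‖ ^ 2 ≤ 2 * (‖z‖ ^ 2 + t ^ 2 * ‖q‖ ^ 2) := by
    simpa [norm_smul, mul_pow, abs_of_pos (inv_pos.2 (mul_pos two_pos hγ))]
      using norm_add_sq_le_two_mul z (t • q)
  have hbound : t * ‖q‖ ^ 2 ≤ C + γ * ‖z‖ ^ 2 + γ * t * (t * ‖q‖ ^ 2) := by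
    linarith [mul_le_mul_of_nonneg_left hnorm (half_pos hγ).le]
  calc ‖q‖ ^ 2 = 4 * γ * (t * ‖q‖ ^ 2) - 4 * γ * (γ * t * (t * ‖q‖ ^ 2)) := by
        linear_combination (-2 * ‖q‖ ^ 2 * (1 - 2 * γ * t)) * htγ
    _ ≤ 4 * γ * C + 4 * γ ^ 2 * ‖z‖ ^ 2 := by
        linarith [mul_le_mul_of_nonneg_left hbound (by positivity : (0 : ℝ) ≤ 4 * γ)]

theorem stmt_14_general (d : ℕ) (γ C₁ : ℝ) (hγ : 0 < γ)
    (g : EuclideanSpace ℝ (Fin d) → ℝ)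
    (hg_nonneg : ∀ w : EuclideanSpace ℝ (Fin d), 0 ≤ g w)
    (hg_growth : ∀ w : EuclideanSpace ℝ (Fin d), g w ≤ C₁ + γ / 2 * ‖w‖ ^ 2)
    (z q : EuclideanSpace ℝ (Fin d))
    (hsub : ∀ w : EuclideanSpace ℝ (Fin d), ⟪w - z, q⟫ ≤ g w - g z) :
    ‖q‖ ^ 2 ≤ 4 * γ * C₁ + 4 * γ ^ 2 * ‖z‖ ^ 2 :=
  sq_norm_subgradient_le_of_quadratic_growth hγ (hg_nonneg z) hg_growth hsub

/-- If `g : ℝ^d → ℝ` satisfies `g 0 = 0` and `0 ≤ g w ≤ C₁ + (γ/2)‖w‖²` for all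
`w`, and `q` is a subgradient of `g` at `z`, then `‖q‖² ≤ 4γC₁ + 4γ²‖z‖²`. -/
theorem stmt_14 (d : ℕ) (γ C₁ : ℝ) (hγ : 0 < γ) (hC₁ : 0 ≤ C₁)
    (g : EuclideanSpace ℝ (Fin d) → ℝ)
    (hg0 : g 0 = 0)
    (hg_nonneg : ∀ w : EuclideanSpace ℝ (Fin d), 0 ≤ g w)
    (hg_growth : ∀ w : EuclideanSpace ℝ (Fin d), g w ≤ C₁ + γ / 2 * ‖w‖ ^ 2)
    (z q : EuclideanSpace ℝ (Fin d))
    (hsub : ∀ w : EuclideanSpace ℝ (Fin d), ⟪w - z, q⟫ ≤ g w - g z) :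
    ‖q‖ ^ 2 ≤ 4 * γ * C₁ + 4 * γ ^ 2 * ‖z‖ ^ 2 :=
  stmt_14_general d γ C₁ hγ g hg_nonneg hg_growth z q hsub
end
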